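/- For every n, there is a digraph D with dichromatic number at least n, clique number at most 3, and no induced directed cycle of odd length at least 5. -/

import Mathlib

/-- Vertex set of the digraph `D (n+1)` from the paper (`Vtx n` = vertices of `D_{n+1}`). -/
def Vtx : ℕ → Type
  | 0 => Unit
  | (n+1) => (Fin (n+1) × Vtx n) ⊕ ((i : Fin (n+1)) → Vtx n)

/-- Edge relation of `D_{n+1}`. -/
def DEdge : (n : ℕ) → Vtx n → Vtx n → Prop
  | 0, _, _ => False
  | (n+1), Sum.inl (i, x), Sum.inl (j, y) => i = j ∧ DEdge n x y
  | (n+1), Sum.inl (i, x), Sum.inr T => T i = x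
  | (_+1), Sum.inr _, _ => False

/-- There is a directed walk of length `k` from `u` to `v`. -/
def WalkLen {V : Type*} (E : V → V → Prop) (u v : V) (k : ℕ) : Prop :=
  ∃ f : Fin (k+1) → V, f 0 = u ∧ f (Fin.last k) = v ∧
    ∀ i : Fin k, E (f i.castSucc) (f i.succ)

/-- `l` is a directed path (as a list of distinct vertices) from `u` to `v`. -/
def IsDPath {V : Type*} (E : V → V → Prop) (u v : V) (l : List V) : Prop :=
  l.Chain' E ∧ l.Nodup ∧ l.head? = some u ∧ l.getLast? = some v

/-- Positive edges of `D'`. -/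
def PosE {V : Type*} (E : V → V → Prop) (u v : V) : Prop :=
  ∃ k, k % 3 = 1 ∧ WalkLen E u v k

/-- Negative edges of `D'`. -/
def NegE {V : Type*} (E : V → V → Prop) (u v : V) : Prop :=
  ∃ k, k % 3 = 2 ∧ WalkLen E v u k

/-- Edge relation of `D_{n+1}'`. -/
def DEdge' (n : ℕ) (u v : Vtx n) : Prop :=
  PosE (DEdge n) u v ∨ NegE (DEdge n) u v

/-- Underlying undirected graph of a digraph. -/
def underSG {V : Type*} (E : V → V → Prop) : SimpleGraph V :=
  SimpleGraph.fromRel E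

/-- `G_{n+1}`, the underlying undirected graph of `D_{n+1}'`. -/
def Gn (n : ℕ) : SimpleGraph (Vtx n) := underSG (DEdge' n)

/-- A digraph is acyclic iff no vertex lies on a directed cycle. -/
def DAcyclic {V : Type*} (E : V → V → Prop) : Prop :=
  ∀ v : V, ¬ Relation.TransGen E v v

/-- `k`-dicolorability. -/
def Dicolorable {V : Type*} (E : V → V → Prop) (k : ℕ) : Prop :=
  ∃ f : V → Fin k, ∀ c : Fin k,
    DAcyclic (fun a b => E a b ∧ f a = c ∧ f b = c)

/-- `D` has an induced directed cycle of odd length at least 5. -/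
def HasInducedOddCycle {V : Type*} (E : V → V → Prop) : Prop :=
  ∃ m : ℕ, 5 ≤ m ∧ Odd m ∧ ∃ f : ZMod m → V, Function.Injective f ∧
    (∀ i, E (f i) (f (i+1))) ∧ (∀ i j, E (f i) (f j) → j = i + 1)

/-!
If all walks between two vertices of a digraph `E` have the same length, signed walk lengths are
additive on triples of comparable vertices, and `walkMod3 E` joins `u` to `v` exactly when the
signed length from `u` to `v` is `1` mod `3`. Residues therefore behave like differences of positions in
`ZMod 3`: four pairwise adjacent vertices would need four distinct positions, and along an induced
cycle the arcs must alternate between forward and backward walks, which an odd cycle cannot do.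

For the dichromatic number take the tagged trees whose children have pairwise disjoint subtrees,
with arcs from child to parent. In a dicolouring of `walkMod3`, a vertex armed by a walk of length
`1` mod `3` from a vertex of its own colour has no out-neighbour of that colour. Joining fresh
children of all colours met so far, armed where possible, either meets a new colour or arms an old
one; with `k` colours this can happen at most `2k` times.
-/

section Walks

variable {V : Type*} {E : V → V → Prop} {u v w : V} {m n : ℕ}

theorem walkLen_zero : WalkLen E u v 0 ↔ u = v :=
  ⟨fun ⟨_, h0, hl, _⟩ => h0.symm.trans hl, fun h => ⟨fun _ => u, rfl, h, Fin.elim0⟩⟩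

theorem walkLen_succ : WalkLen E u w (n + 1) ↔ ∃ v, WalkLen E u v n ∧ E v w := by
  constructor
  · rintro ⟨f, h0, hl, hf⟩
    refine ⟨f (Fin.last n).castSucc, ⟨fun i => f i.castSucc, h0, rfl, fun i => ?_⟩, ?_⟩
    · simpa only [Fin.succ_castSucc] using hf i.castSucc
    · simpa only [Fin.succ_last, hl] using hf (Fin.last n)
  · rintro ⟨v, ⟨f, h0, hl, hf⟩, hvw⟩
    refine ⟨Fin.snoc f w, by simpa using h0, by simp, fun i => ?_⟩
    induction i using Fin.lastCases with
    | last => simpa [hl] using hvw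
    | cast i => rw [Fin.succ_castSucc, Fin.snoc_castSucc, Fin.snoc_castSucc]; exact hf i

theorem walkLen_one : WalkLen E u v 1 ↔ E u v := by
  simp [walkLen_succ, walkLen_zero]

theorem WalkLen.trans (huv : WalkLen E u v m) (hvw : WalkLen E v w n) :
    WalkLen E u w (m + n) := by
  induction n generalizing w with
  | zero => rwa [walkLen_zero.1 hvw] at huv
  | succ n ih =>
    obtain ⟨x, hvx, hxw⟩ := walkLen_succ.1 hvw
    exact walkLen_succ.2 ⟨x, ih hvx, hxw⟩

theorem WalkLen.reflTransGen (h : WalkLen E u v n) : Relation.ReflTransGen E u v := by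
  induction n generalizing v with
  | zero => rw [walkLen_zero.1 h]
  | succ n ih =>
    obtain ⟨x, hux, hxv⟩ := walkLen_succ.1 h
    exact (ih hux).tail hxv

end Walks

section UniqueWalkLengths

variable {V : Type*} {E : V → V → Prop} {u v w : V}

def HasUniqueWalkLengths (E : V → V → Prop) : Prop :=
  ∀ ⦃u v : V⦄ ⦃m n : ℕ⦄, WalkLen E u v m → WalkLen E u v n → m = n

theorem WalkLen.rank_add_le (rank : V → ℕ) (hrank : ∀ ⦃u v⦄, E u v → rank u < rank v)
    {n : ℕ} (h : WalkLen E u v n) : rank u + n ≤ rank v := by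
  induction n generalizing v with
  | zero => rw [walkLen_zero.1 h]; simp
  | succ n ih =>
    obtain ⟨x, hux, hxv⟩ := walkLen_succ.1 h
    have := ih hux
    have := hrank hxv
    omega

theorem hasUniqueWalkLengths_of_rank (rank : V → ℕ) (hrank : ∀ ⦃u v⦄, E u v → rank u < rank v)
    (hin : ∀ ⦃u x y v⦄, E x v → E y v → Relation.ReflTransGen E u x →
      Relation.ReflTransGen E u y → x = y) :
    HasUniqueWalkLengths E := by
  intro u v m n hm hn
  induction m generalizing v n with
  | zero =>
    rw [← walkLen_zero.1 hm] at hn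
    have := hn.rank_add_le rank hrank
    omega
  | succ m ih =>
    cases n with
    | zero =>
      rw [← walkLen_zero.1 hn] at hm
      have := hm.rank_add_le rank hrank
      omega
    | succ n =>
      obtain ⟨x, hux, hxv⟩ := walkLen_succ.1 hm
      obtain ⟨y, huy, hyv⟩ := walkLen_succ.1 hn
      obtain rfl := hin hxv hyv hux.reflTransGen huy.reflTransGen
      rw [ih hux huy]

def SignedWalkLen (E : V → V → Prop) (u v : V) (d : ℤ) : Prop :=
  (∃ n : ℕ, WalkLen E u v n ∧ d = n) ∨ ∃ n : ℕ, WalkLen E v u n ∧ d = -n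

theorem signedWalkLen_self (u : V) : SignedWalkLen E u u 0 :=
  .inl ⟨0, walkLen_zero.2 rfl, rfl⟩

theorem SignedWalkLen.symm {d : ℤ} (h : SignedWalkLen E u v d) : SignedWalkLen E v u (-d) := by
  rcases h with ⟨n, hn, rfl⟩ | ⟨n, hn, rfl⟩
  · exact .inr ⟨n, hn, rfl⟩
  · exact .inl ⟨n, hn, by rw [neg_neg]⟩

/-- In each of the eight orientations, two of the walks compose to a walk with the same ends as the
third, or all three close up to a walk of length zero. -/
theorem SignedWalkLen.add (hE : HasUniqueWalkLengths E) {a b c : ℤ}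
    (huv : SignedWalkLen E u v a) (hvw : SignedWalkLen E v w b) (huw : SignedWalkLen E u w c) :
    c = a + b := by
  have cycle {x y z : V} {l m n : ℕ} (hxy : WalkLen E x y l) (hyz : WalkLen E y z m)
      (hzx : WalkLen E z x n) : l + m + n = 0 :=
    hE ((hxy.trans hyz).trans hzx) (walkLen_zero.2 rfl)
  rcases huv with ⟨l, hl, rfl⟩ | ⟨l, hl, rfl⟩ <;> rcases hvw with ⟨m, hm, rfl⟩ | ⟨m, hm, rfl⟩ <;>
    rcases huw with ⟨n, hn, rfl⟩ | ⟨n, hn, rfl⟩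
  · have := hE (hl.trans hm) hn; omega
  · have := cycle hl hm hn; omega
  · have := hE (hn.trans hm) hl; omega
  · have := hE (hn.trans hl) hm; omega
  · have := hE (hl.trans hn) hm; omega
  · have := hE (hm.trans hn) hl; omega
  · have := cycle hn hm hl; omega
  · have := hE (hm.trans hl) hn; omega

theorem SignedWalkLen.unique (hE : HasUniqueWalkLengths E) {a b : ℤ}
    (ha : SignedWalkLen E u v a) (hb : SignedWalkLen E u v b) : a = b := by
  have := (signedWalkLen_self u).add hE ha hb
  omega

end UniqueWalkLengths

section WalkMod3

variable {V : Type*} {E : V → V → Prop} {u v : V}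

def walkMod3 (E : V → V → Prop) (u v : V) : Prop :=
  PosE E u v ∨ NegE E u v

theorem walkMod3_iff : walkMod3 E u v ↔ ∃ d, SignedWalkLen E u v d ∧ d % 3 = 1 := by
  constructor
  · rintro (⟨n, hn, huv⟩ | ⟨n, hn, hvu⟩)
    · exact ⟨n, .inl ⟨n, huv, rfl⟩, by omega⟩
    · exact ⟨-n, .inr ⟨n, hvu, rfl⟩, by omega⟩
  · rintro ⟨d, ⟨n, huv, rfl⟩ | ⟨n, hvu, rfl⟩, hd⟩
    · exact .inl ⟨n, by omega, huv⟩
    · exact .inr ⟨n, by omega, hvu⟩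

theorem underSG_walkMod3_adj :
    (underSG (walkMod3 E)).Adj u v ↔ u ≠ v ∧ ∃ d, SignedWalkLen E u v d ∧ d % 3 ≠ 0 := by
  rw [underSG, SimpleGraph.fromRel_adj, walkMod3_iff, walkMod3_iff]
  refine and_congr_right fun _ => ⟨?_, ?_⟩
  · rintro (⟨d, hd, hd1⟩ | ⟨d, hd, hd1⟩)
    · exact ⟨d, hd, by omega⟩
    · exact ⟨-d, hd.symm, by omega⟩
  · rintro ⟨d, hd, hd0⟩
    by_cases hd1 : d % 3 = 1
    · exact .inl ⟨d, hd, hd1⟩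
    · exact .inr ⟨-d, hd.symm, by omega⟩

theorem walkMod3_irrefl (hE : HasUniqueWalkLengths E) (v : V) : ¬ walkMod3 E v v := by
  intro h
  obtain ⟨d, hd, hd1⟩ := walkMod3_iff.1 h
  have := hd.unique hE (signedWalkLen_self v)
  omega

theorem walkMod3_asymm (hE : HasUniqueWalkLengths E) (huv : walkMod3 E u v) :
    ¬ walkMod3 E v u := by
  obtain ⟨d, hd, hd1⟩ := walkMod3_iff.1 huv
  intro h
  obtain ⟨e, he, he1⟩ := walkMod3_iff.1 h
  have := hd.unique hE he.symm
  omega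

/-- Measure all signed lengths mod `3` from one vertex `a` of the clique: among four vertices two
get the same residue, and the cocycle identity makes their own signed length `0` mod `3`. -/
theorem not_isNClique_four_walkMod3 (hE : HasUniqueWalkLengths E) (s : Finset V) :
    ¬ (underSG (walkMod3 E)).IsNClique 4 s := by
  intro hs
  obtain ⟨a, ha⟩ : s.Nonempty := by rw [← Finset.card_pos, hs.card_eq]; norm_num
  have hdist : ∀ v ∈ s, ∃ d, SignedWalkLen E a v d := by
    intro v hv
    by_cases hav : a = v
    · exact ⟨0, hav ▸ signedWalkLen_self a⟩
    · obtain ⟨-, d, hd, -⟩ := underSG_walkMod3_adj.1 (hs.isClique ha hv hav)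
      exact ⟨d, hd⟩
  choose! dist hdist using hdist
  obtain ⟨u, hu, v, hv, huv, hmod⟩ :=
    Finset.exists_ne_map_eq_of_card_lt_of_maps_to (s := s) (t := Finset.Ico (0 : ℤ) 3)
      (f := fun v => dist v % 3) (by simp [hs.card_eq]) fun v _ => by simp; omega
  obtain ⟨-, d, hd, hd0⟩ := underSG_walkMod3_adj.1 (hs.isClique hu hv huv)
  have := (hdist u hu).add hE hd (hdist v hv)
  omega

end WalkMod3

theorem ZMod.not_forall_add_one_iff_not {m : ℕ} (hm : Odd m) (p : ZMod m → Prop) :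
    ¬ ∀ i, p (i + 1) ↔ ¬ p i := by
  intro hp
  have hparity : ∀ n : ℕ, p n ↔ (p 0 ↔ Even n) := by
    intro n
    induction n with
    | zero => simp
    | succ n ih => rw [Nat.cast_succ, hp, ih, Nat.even_add_one]; tauto
  have := hparity m
  rw [ZMod.natCast_self, iff_false_intro (Nat.not_even_iff_odd.2 hm)] at this
  tauto

/-- Two consecutive arcs of the cycle that both come from forward walks, or both from backward
walks, compose to a chord; so the two kinds alternate, which an odd cycle cannot do. -/
theorem not_hasInducedOddCycle_walkMod3 {V : Type*} (E : V → V → Prop) :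
    ¬ HasInducedOddCycle (walkMod3 E) := by
  rintro ⟨m, hm5, hodd, f, -, harc, hind⟩
  have hchord : ∀ i, ¬ walkMod3 E (f (i + 1 + 1)) (f i) := by
    intro i h
    have h3 : ((3 : ℕ) : ZMod m) = 0 := by
      have := hind _ _ h
      push_cast
      linear_combination -this
    have := Nat.le_of_dvd (by norm_num) ((ZMod.natCast_eq_zero_iff 3 m).1 h3)
    omega
  refine ZMod.not_forall_add_one_iff_not hodd (fun i => PosE E (f i) (f (i + 1))) fun i => ⟨?_, ?_⟩
  · rintro ⟨b, hb, hwb⟩ ⟨a, ha, hwa⟩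
    exact hchord i (.inr ⟨a + b, by omega, hwa.trans hwb⟩)
  · intro h1
    by_contra h2
    obtain ⟨a, ha, hwa⟩ := (harc i).resolve_left h1
    obtain ⟨b, hb, hwb⟩ := (harc (i + 1)).resolve_left h2
    exact hchord i (.inl ⟨b + a, by omega, hwb.trans hwa⟩)

section Dicolouring

variable {V ι : Type*} {E R : V → V → Prop}

def HasFreshJoins (E R : V → V → Prop) : Prop :=
  ∀ X A : List V, X.Pairwise R → (∀ x ∈ X, ∀ a ∈ A, R x a) →
    ∃ z, (∀ x ∈ X, E x z) ∧ ∀ a ∈ A, R z a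

def FreshlyOften (R : V → V → Prop) (P : V → Prop) : Prop :=
  ∀ A : List V, ∃ v, P v ∧ ∀ a ∈ A, R v a

theorem FreshlyOften.mono {P Q : V → Prop} (h : FreshlyOften R P) (hPQ : ∀ v, P v → Q v) :
    FreshlyOften R Q :=
  fun A => (h A).imp fun v hv => ⟨hPQ v hv.1, hv.2⟩

theorem FreshlyOften.exists_eq [Fintype ι] {P : V → Prop} (h : FreshlyOften R P) (g : V → ι) :
    ∃ c, FreshlyOften R fun v => P v ∧ g v = c := by
  by_contra! hne
  choose A hA using fun c => not_forall.1 (hne c)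
  obtain ⟨v, hv, hfresh⟩ := h (Finset.univ.toList.flatMap A)
  exact hA (g v) ⟨v, ⟨hv, rfl⟩, fun a ha => hfresh a (List.mem_flatMap.2 ⟨g v, by simp, ha⟩)⟩

theorem exists_pairwise_of_freshlyOften {Q : ι → V → Prop} (L : List ι)
    (h : ∀ i ∈ L, FreshlyOften R (Q i)) (A : List V) :
    ∃ X : List V, X.Pairwise R ∧ (∀ x ∈ X, ∀ a ∈ A, R x a) ∧ ∀ i ∈ L, ∃ x ∈ X, Q i x := by
  induction L with
  | nil => exact ⟨[], .nil, by simp, by simp⟩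
  | cons i L ih =>
    obtain ⟨X, hX, hXA, hXL⟩ := ih fun j hj => h j (List.mem_cons_of_mem _ hj)
    obtain ⟨x, hx, hxfresh⟩ := h i List.mem_cons_self (A ++ X)
    refine ⟨x :: X, .cons (fun y hy => hxfresh y (List.mem_append_right _ hy)) hX, ?_, ?_⟩
    · rintro y (_ | ⟨_, hy⟩) a ha
      · exact hxfresh a (List.mem_append_left _ ha)
      · exact hXA y hy a ha
    · rintro j (_ | ⟨_, hj⟩)
      · exact ⟨x, List.mem_cons_self, hx⟩
      · obtain ⟨y, hy, hQy⟩ := hXL j hj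
        exact ⟨y, List.mem_cons_of_mem _ hy, hQy⟩

theorem HasFreshJoins.freshlyOften (hJ : HasFreshJoins E R) {Q : ι → V → Prop} (L : List ι)
    (h : ∀ i ∈ L, FreshlyOften R (Q i)) :
    FreshlyOften R fun z => ∀ i ∈ L, ∃ x, E x z ∧ Q i x := by
  intro A
  obtain ⟨X, hX, hXA, hXL⟩ := exists_pairwise_of_freshlyOften L h A
  obtain ⟨z, hXz, hzA⟩ := hJ X A hX hXA
  exact ⟨z, fun i hi => (hXL i hi).imp fun x hx => ⟨hXz x hx.1, hx.2⟩, hzA⟩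

def IsArmed (E : V → V → Prop) (f : V → ι) (x : V) : Prop :=
  ∃ y n, WalkLen E y x n ∧ n % 3 = 1 ∧ f y = f x

/-- Otherwise `y → x → z → y` is a monochromatic directed triangle of `walkMod3 E`, where `y`
arms `x`. -/
theorem IsArmed.color_ne {f : V → ι} {x z : V}
    (hf : ∀ c, DAcyclic fun a b => walkMod3 E a b ∧ f a = c ∧ f b = c) (hx : IsArmed E f x)
    (hxz : E x z) : f z ≠ f x := by
  obtain ⟨y, n, hyx, hn, hfy⟩ := hx
  intro hfz
  have hyz := hyx.trans (walkLen_one.2 hxz)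
  exact hf (f x) y <|
    .head ⟨.inl ⟨n, hn, hyx⟩, hfy, rfl⟩ <|
    .head ⟨.inl ⟨1, rfl, walkLen_one.2 hxz⟩, rfl, hfz⟩ <|
    .single ⟨.inr ⟨n + 1, by omega, hyz⟩, hfz, hfy⟩

def Supplied (E R : V → V → Prop) (f : V → ι) (S C : Finset ι) : Prop :=
  S ⊆ C ∧ ∀ c ∈ C, FreshlyOften R fun x => f x = c ∧ (c ∈ S → IsArmed E f x)

/-- A fresh join of supplied children has a colour `c ∉ S` by `IsArmed.color_ne`; if `c ∈ C` the
join is armed by its child of colour `c`, so `c` moves into `S`, and otherwise `c` joins `C`. -/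
theorem Supplied.exists_card_lt [Fintype ι] [DecidableEq ι] {f : V → ι} (hJ : HasFreshJoins E R)
    (hf : ∀ c, DAcyclic fun a b => walkMod3 E a b ∧ f a = c ∧ f b = c) {S C : Finset ι}
    (h : Supplied E R f S C) :
    ∃ S' C', Supplied E R f S' C' ∧ S.card + C.card < S'.card + C'.card := by
  obtain ⟨hSC, hC⟩ := h
  obtain ⟨c, hc⟩ := (hJ.freshlyOften C.toList fun c hc => hC c (Finset.mem_toList.1 hc)).exists_eq f
  have hcS : c ∉ S := by
    intro hcS
    obtain ⟨z, ⟨hz, rfl⟩, -⟩ := hc []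
    obtain ⟨x, hxz, hfx, hx⟩ := hz (f z) (Finset.mem_toList.2 (hSC hcS))
    exact (hx hcS).color_ne hf hxz hfx.symm
  by_cases hcC : c ∈ C
  · refine ⟨insert c S, C, ⟨Finset.insert_subset hcC hSC, fun c' hc' => ?_⟩, ?_⟩
    · by_cases hc'c : c' = c
      · subst hc'c
        refine hc.mono fun z ⟨hz, hfz⟩ => ⟨hfz, fun _ => ?_⟩
        obtain ⟨x, hxz, hfx, -⟩ := hz c' (Finset.mem_toList.2 hcC)
        exact ⟨x, 1, walkLen_one.2 hxz, rfl, hfx.trans hfz.symm⟩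
      · exact (hC c' hc').mono fun x ⟨hfx, hx⟩ =>
          ⟨hfx, fun h => hx ((Finset.mem_insert.1 h).resolve_left hc'c)⟩
    · rw [Finset.card_insert_of_notMem hcS]
      omega
  · refine ⟨S, insert c C, ⟨hSC.trans (Finset.subset_insert _ _), fun c' hc' => ?_⟩, ?_⟩
    · rcases Finset.mem_insert.1 hc' with rfl | hc'
      · exact hc.mono fun z ⟨_, hfz⟩ => ⟨hfz, fun h => (hcS h).elim⟩
      · exact hC c' hc'
    · rw [Finset.card_insert_of_notMem hcC]
      omega

theorem not_dicolorable_walkMod3 (hJ : HasFreshJoins E R) (k : ℕ) :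
    ¬ Dicolorable (walkMod3 E) k := by
  rintro ⟨f, hf⟩
  have hsupplied (n : ℕ) : ∃ S C, Supplied E R f S C ∧ n ≤ S.card + C.card := by
    induction n with
    | zero => exact ⟨∅, ∅, ⟨subset_rfl, by simp⟩, le_rfl⟩
    | succ n ih =>
      obtain ⟨S, C, h, hn⟩ := ih
      obtain ⟨S', C', h', hlt⟩ := h.exists_card_lt hJ hf
      exact ⟨S', C', h', by omega⟩
  obtain ⟨S, C, -, hcard⟩ := hsupplied (2 * k + 1)
  have hS := S.card_le_univ
  have hC := C.card_le_univ
  simp only [Fintype.card_fin] at hS hC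
  omega

end Dicolouring

inductive TagTree : Type
  | node : ℕ → List TagTree → TagTree

namespace TagTree

def children : TagTree → List TagTree
  | node _ ch => ch

inductive IsSubtree : TagTree → TagTree → Prop
  | refl (t : TagTree) : IsSubtree t t
  | child {u s t : TagTree} : s ∈ t.children → IsSubtree u s → IsSubtree u t

theorem sizeOf_lt_of_mem_children {s t : TagTree} (h : s ∈ t.children) : sizeOf s < sizeOf t := by
  cases t with
  | node a ch =>
    have := List.sizeOf_lt_of_mem (show s ∈ ch from h)
    simp only [node.sizeOf_spec]
    omega

theorem IsSubtree.sizeOf_le {s t : TagTree} (h : IsSubtree s t) : sizeOf s ≤ sizeOf t := by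
  induction h with
  | refl => exact le_rfl
  | child hst _ ih => exact ih.trans (sizeOf_lt_of_mem_children hst).le

def SubtreeDisjoint (s t : TagTree) : Prop :=
  ∀ u, IsSubtree u s → IsSubtree u t → False

instance : Std.Symm SubtreeDisjoint :=
  ⟨fun _ _ h u hb ha => h u ha hb⟩

def Vertex : Type :=
  {t : TagTree // t.children.Pairwise SubtreeDisjoint}

def IsChild (u v : Vertex) : Prop :=
  u.1 ∈ v.1.children

theorem isSubtree_of_reflTransGen {u v : Vertex} (h : Relation.ReflTransGen IsChild u v) :
    IsSubtree u.1 v.1 := by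
  induction h with
  | refl => exact .refl _
  | tail _ hbc ih => exact .child hbc ih

theorem hasUniqueWalkLengths_isChild : HasUniqueWalkLengths IsChild :=
  hasUniqueWalkLengths_of_rank (fun v => sizeOf v.1) (fun _ _ h => sizeOf_lt_of_mem_children h)
    fun u x y v hxv hyv hux huy => by
      by_contra hxy
      exact v.2.forall hxv hyv (fun h => hxy (Subtype.ext h)) u.1
        (isSubtree_of_reflTransGen hux) (isSubtree_of_reflTransGen huy)

theorem hasFreshJoins_isChild : HasFreshJoins IsChild fun u v => SubtreeDisjoint u.1 v.1 := by
  intro X A hX hXA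
  -- The tag makes `z` larger than every vertex of `A`, so `z` is a subtree of none of them.
  set z := node (A.map fun a => sizeOf a.1).sum (X.map Subtype.val)
  have hz : ∀ a ∈ A, sizeOf a.1 < sizeOf z := fun a ha => by
    have := List.le_sum_of_mem (List.mem_map_of_mem (f := fun a : Vertex => sizeOf a.1) ha)
    simp only [z, node.sizeOf_spec, sizeOf_nat]
    omega
  refine ⟨⟨z, hX.map _ fun _ _ h => h⟩, fun x hx => List.mem_map_of_mem hx, fun a ha u hu hua => ?_⟩
  rcases hu with _ | ⟨hs, hu⟩
  · exact absurd hua.sizeOf_le (not_le.2 (hz a ha))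
  · obtain ⟨x, hx, rfl⟩ := List.mem_map.1 hs
    exact hXA x hx a ha u hu hua

end TagTree

/-- there is a (simple) digraph with dichromatic number at least `n`,
clique number at most 3, and no induced directed cycle of odd length at least 5. -/
theorem main_digraph (n : ℕ) :
    ∃ (V : Type) (E : V → V → Prop),
      (∀ v, ¬ E v v) ∧ (∀ u v, E u v → ¬ E v u) ∧
      (∀ k, Dicolorable E k → n ≤ k) ∧
      (∀ s : Finset V, ¬ (underSG E).IsNClique 4 s) ∧
      ¬ HasInducedOddCycle E := by
  open TagTree in
  exact ⟨Vertex, walkMod3 IsChild,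
    walkMod3_irrefl hasUniqueWalkLengths_isChild,
    fun _ _ => walkMod3_asymm hasUniqueWalkLengths_isChild,
    fun k hk => (not_dicolorable_walkMod3 hasFreshJoins_isChild k hk).elim,
    not_isNClique_four_walkMod3 hasUniqueWalkLengths_isChild,
    not_hasInducedOddCycle_walkMod3 IsChild⟩
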